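/- arXiv:2205.04850 — 3 statements merged into one kernel-verified Lean document; each statement's English description precedes it below -/
import Mathlib

section
/- Let q be a landmark of a STRIPS planning problem P that does not hold in the initial state. If there exists an atom p such that every action a with q ∈ eff⁺_a satisfies p ∈ pre_a, then p is also a landmark of P. Moreover, in every solution plan, p holds in some state strictly before the first state in which q holds (a greedy necessary ordering p →_gn q restricted to this setting). -/
structure Act (Atom : Type*) where
  pre : Set Atom
  addEff : Set Atom
  delEff : Set Atom

structure Prob (Atom : Type*) where
  I : Set Atom
  G : Set Atom
  acts : Set (Act Atom)

/-- STRIPS successor state: s' = (s \ eff⁻) ∪ eff⁺. -/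
def stripsSucc {Atom : Type*} (s : Set Atom) (a : Act Atom) : Set Atom :=
  (s \ a.delEff) ∪ a.addEff

/-- Each action in the plan is applicable in the state where it is applied. -/
def validFrom {Atom : Type*} (s : Set Atom) : List (Act Atom) → Prop
  | [] => True
  | a :: rest => a.pre ⊆ s ∧ validFrom (stripsSucc s a) rest

/-- A plan solves P iff its actions belong to P, are applicable along the way,
and the goal holds in the final state. -/
def Solves {Atom : Type*} (P : Prob Atom) (π : List (Act Atom)) : Prop :=
  (∀ a ∈ π, a ∈ P.acts) ∧ validFrom P.I π ∧ P.G ⊆ π.foldl stripsSucc P.I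

/-- The trajectory of states induced by executing plan π from the initial state. -/
def traj {Atom : Type*} (P : Prob Atom) (π : List (Act Atom)) : List (Set Atom) :=
  List.scanl stripsSucc P.I π

/-- An atom is a landmark iff it holds in some state of every solution trajectory. -/
def IsLandmark {Atom : Type*} (P : Prob Atom) (p : Atom) : Prop :=
  ∀ π, Solves P π → ∃ s ∈ traj P π, p ∈ s

theorem List.exists_mem_getD_empty_iff {α : Type*} {l : List (Set α)} {x : α} :
    (∃ s ∈ l, x ∈ s) ↔ ∃ i, x ∈ l.getD i ∅ := by
  constructor
  · rintro ⟨s, hs, hx⟩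
    obtain ⟨i, hi, rfl⟩ := List.getElem_of_mem hs
    exact ⟨i, by rwa [List.getD_eq_getElem _ _ hi]⟩
  · rintro ⟨i, hx⟩
    by_cases hi : i < l.length
    · rw [List.getD_eq_getElem _ _ hi] at hx
      exact ⟨_, List.getElem_mem hi, hx⟩
    · rw [List.getD_eq_default _ _ (not_lt.mp hi)] at hx
      exact hx.elim

theorem mem_addEff_of_mem_stripsSucc {Atom : Type*} {s : Set Atom} {a : Act Atom} {q : Atom}
    (hq : q ∈ stripsSucc s a) (hqs : q ∉ s) : q ∈ a.addEff :=
  hq.resolve_left fun h => hqs h.1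

/-- The first state containing `q` is produced by an action adding `q`, applied in the preceding
state, which therefore contains `p`. -/
theorem validFrom.exists_lt_mem_getD {Atom : Type*} {q p : Atom} :
    ∀ {s : Set Atom} {π : List (Act Atom)}, validFrom s π →
      (∀ a ∈ π, q ∈ a.addEff → p ∈ a.pre) → q ∉ s →
      ∀ {i}, q ∈ (π.scanl stripsSucc s).getD i ∅ →
        ∃ j < i, p ∈ (π.scanl stripsSucc s).getD j ∅
  | _, [], _, _, hqs, 0, hqi => (hqs hqi).elim
  | _, [], _, _, _, _ + 1, hqi => hqi.elim
  | _, _ :: _, _, _, hqs, 0, hqi => (hqs (by simpa using hqi)).elim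
  | s, a :: rest, ⟨ha, hrest⟩, hpre, hqs, i + 1, hqi => by
    simp only [List.scanl_cons, List.getD_cons_succ] at hqi ⊢
    by_cases hq1 : q ∈ stripsSucc s a
    · have hp : p ∈ a.pre :=
        hpre a List.mem_cons_self (mem_addEff_of_mem_stripsSucc hq1 hqs)
      exact ⟨0, i.succ_pos, ha hp⟩
    · obtain ⟨j, hj, hpj⟩ :=
        hrest.exists_lt_mem_getD (fun b hb => hpre b (List.mem_cons_of_mem a hb)) hq1 hqi
      exact ⟨j + 1, Nat.succ_lt_succ hj, hpj⟩

/-- LAMA back-chaining rule: if q is a landmark not holding initially and every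
action adding q has p as a precondition, then p is a landmark, and in every
solution plan p holds strictly before the first state where q holds. -/
theorem shared_precondition_is_landmark {Atom : Type*} (P : Prob Atom) (q p : Atom)
    (hq : IsLandmark P q) (hq0 : q ∉ P.I)
    (hpre : ∀ a ∈ P.acts, q ∈ a.addEff → p ∈ a.pre) :
    IsLandmark P p ∧
      ∀ π, Solves P π →
        ∀ i, i < (traj P π).length → q ∈ (traj P π).getD i ∅ →
          (∀ k < i, q ∉ (traj P π).getD k ∅) →
          ∃ j < i, p ∈ (traj P π).getD j ∅ := by
  have hbefore : ∀ π, Solves P π → ∀ i, q ∈ (traj P π).getD i ∅ →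
      ∃ j < i, p ∈ (traj P π).getD j ∅ := fun π ⟨hacts, hvalid, _⟩ _ hqi =>
    hvalid.exists_lt_mem_getD (fun a ha => hpre a (hacts a ha)) hq0 hqi
  refine ⟨fun π hπ => ?_, fun π hπ i _ hqi _ => hbefore π hπ i hqi⟩
  obtain ⟨i, hqi⟩ := List.exists_mem_getD_empty_iff.mp (hq π hπ)
  obtain ⟨j, -, hpj⟩ := hbefore π hπ i hqi
  exact List.exists_mem_getD_empty_iff.mpr ⟨j, hpj⟩
end

section
/- If some atom q in the goal G of a STRIPS planning problem does not hold in the initial state and every action that adds q shares a common precondition atom p, and p itself does not hold in the initial state, then in every solution plan some action must be applied in a state containing p; in particular p is a landmark. -/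
theorem key_lemma {Atom : Type*} (P : Prob Atom) (q p : Atom)
    (hpre : ∀ a ∈ P.acts, q ∈ a.addEff → p ∈ a.pre) :
    ∀ (π : List (Act Atom)) (s : Set Atom), (∀ a ∈ π, a ∈ P.acts) → validFrom s π →
      q ∉ s → q ∈ π.foldl stripsSucc s →
      ∃ i < π.length, p ∈ (List.scanl stripsSucc s π).getD i ∅ := by
  intro π
  induction π with
  | nil => intro s _ _ hqs hqf; simp [List.foldl] at hqf; exact absurd hqf hqs
  | cons a rest ih =>
    intro s hacts hvalid hqs hqf
    by_cases hadd : q ∈ a.addEff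
    · refine ⟨0, by simp, ?_⟩
      simp [List.scanl]
      exact hvalid.1 (hpre a (hacts a (by simp)) hadd)
    · have hq' : q ∉ stripsSucc s a := by
        intro h
        rcases h with h | h
        · exact hqs h.1
        · exact hadd h
      obtain ⟨i, hi, hp⟩ := ih (stripsSucc s a) (fun b hb => hacts b (by simp [hb]))
        hvalid.2 hq' hqf
      exact ⟨i + 1, by simpa using Nat.succ_lt_succ hi, by simpa [List.scanl] using hp⟩

/-- If a goal atom q does not hold initially and every action adding q shares
precondition p, with p not holding initially, then in every solution plan some
action is applied in a state containing p; in particular p is a landmark. -/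
theorem goal_shared_precondition {Atom : Type*} (P : Prob Atom) (q p : Atom)
    (hqG : q ∈ P.G) (hq0 : q ∉ P.I)
    (hpre : ∀ a ∈ P.acts, q ∈ a.addEff → p ∈ a.pre)
    (hp0 : p ∉ P.I) :
    (∀ π, Solves P π → ∃ i < π.length, p ∈ (traj P π).getD i ∅) ∧
      IsLandmark P p := by
  have main : ∀ π, Solves P π → ∃ i < π.length, p ∈ (traj P π).getD i ∅ := by
    intro π hsol
    exact key_lemma P q p hpre π P.I hsol.1 hsol.2.1 hq0 (hsol.2.2 hqG)
  refine ⟨main, ?_⟩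
  intro π hsol
  obtain ⟨i, hi, hp⟩ := main π hsol
  have hlen : i < (traj P π).length := by
    simp [traj, List.length_scanl]
    omega
  refine ⟨(traj P π).getD i ∅, ?_, hp⟩
  rw [List.getD_eq_getElem _ _ hlen]
  exact List.getElem_mem hlen
end

section
/- In the Gripper-style single-ball-per-trip program, executed on an instance with two rooms A (index 0) and B (index 1) and n ≥ 1 balls all initially in room A with the robot in room A holding nothing: the program terminates and the final state has all n balls in room B. In particular, the loop body maintains the invariant that after the k-th iteration the first k balls are in room B, the robot is in room A, and the gripper is free. -/
/-- A configuration of the Gripper program on an instance with two rooms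
(A = 0, B = 1), n balls and a single gripper: the STRIPS state (robot room,
room of each ball or `none` if carried, ball carried by the gripper or `none`
if free), the program line, the pointers z_{r1}, z_{r2}, z_b (the gripper
pointer z_g is never modified), and the zero flag. -/
structure GCfg where
  robby : ℕ
  ballRoom : ℕ → Option ℕ
  carrying : Option ℕ
  line : ℕ
  zr1 : ℕ
  zr2 : ℕ
  zb : ℕ
  flag : Bool

/-- One execution step of the Gripper program
0: pick(z_b, z_{r1}, z_g); 1: inc(z_{r2}); 2: move(z_{r1}, z_{r2});
3: drop(z_b, z_{r2}, z_g); 4: move(z_{r2}, z_{r1}); 5: inc(z_b);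
6: goto(0, ¬y_z); 7: end.
Room pointers range over {0,1}, the ball pointer over {0,…,n-1}; inc(z) is
applicable iff z is below its domain maximum, setting the flag to false when
applicable and true otherwise; inapplicable planning actions leave the planning
state unchanged (and set the flag to true). -/
def gstep (n : ℕ) (c : GCfg) : GCfg :=
  match c.line with
  | 0 => if c.ballRoom c.zb = some c.zr1 ∧ c.robby = c.zr1 ∧ c.carrying = none then
           { c with ballRoom := Function.update c.ballRoom c.zb none,
                    carrying := some c.zb, line := 1 }
         else { c with flag := true, line := 1 }
  | 1 => if c.zr2 < 1 then { c with zr2 := c.zr2 + 1, flag := false, line := 2 }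
         else { c with flag := true, line := 2 }
  | 2 => if c.robby = c.zr1 then { c with robby := c.zr2, line := 3 }
         else { c with flag := true, line := 3 }
  | 3 => if c.carrying = some c.zb ∧ c.robby = c.zr2 then
           { c with ballRoom := Function.update c.ballRoom c.zb (some c.zr2),
                    carrying := none, line := 4 }
         else { c with flag := true, line := 4 }
  | 4 => if c.robby = c.zr2 then { c with robby := c.zr1, line := 5 }
         else { c with flag := true, line := 5 }
  | 5 => if c.zb < n - 1 then { c with zb := c.zb + 1, flag := false, line := 6 }
         else { c with flag := true, line := 6 }
  | 6 => if c.flag then { c with line := 7 } else { c with line := 0 }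
  | _ => c

/-- Initial configuration: robot in room A, all balls in room A, gripper free,
all pointers 0, at program line 0. -/
def ginit : GCfg := ⟨0, fun _ => some 0, none, 0, 0, 0, 0, false⟩

/-- Configuration after `k` iterations of the loop. -/
def gcfg (n k : ℕ) : GCfg :=
  if k < n then ⟨0, fun b => if b < k then some 1 else some 0, none, 0, 0, min k 1, k, false⟩
  else ⟨0, fun b => if b < n then some 1 else some 0, none, 7, 0, 1, n - 1, true⟩

lemma iter7 (n k : ℕ) (hk : k < n) (z2 : ℕ) (hz : z2 = 0 ∨ z2 = 1)
    (f : ℕ → Option ℕ) (hf : f k = some 0) :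
    (gstep n)^[7] (⟨0, f, none, 0, 0, z2, k, false⟩ : GCfg) =
      if k + 1 < n then
        (⟨0, Function.update f k (some 1), none, 0, 0, 1, k + 1, false⟩ : GCfg)
      else ⟨0, Function.update f k (some 1), none, 7, 0, 1, k, true⟩ := by
  have h0 : gstep n (⟨0, f, none, 0, 0, z2, k, false⟩ : GCfg) =
      ⟨0, Function.update f k none, some k, 1, 0, z2, k, false⟩ := by
    simp [gstep, hf]
  have h1 : ∃ b : Bool, gstep n (⟨0, Function.update f k none, some k, 1, 0, z2, k, false⟩ : GCfg) =
      ⟨0, Function.update f k none, some k, 2, 0, 1, k, b⟩ := by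
    rcases hz with h | h <;> subst h
    · exact ⟨false, by simp [gstep]⟩
    · exact ⟨true, by simp [gstep]⟩
  obtain ⟨b, h1⟩ := h1
  have h2 : gstep n (⟨0, Function.update f k none, some k, 2, 0, 1, k, b⟩ : GCfg) =
      ⟨1, Function.update f k none, some k, 3, 0, 1, k, b⟩ := by
    simp [gstep]
  have hupd : Function.update (Function.update f k none) k (some 1) =
      Function.update f k (some 1) := by
    funext x; by_cases hx : x = k <;> simp [Function.update, hx]
  have h3 : gstep n (⟨1, Function.update f k none, some k, 3, 0, 1, k, b⟩ : GCfg) =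
      ⟨1, Function.update f k (some 1), none, 4, 0, 1, k, b⟩ := by
    simp [gstep, hupd]
  have h4 : gstep n (⟨1, Function.update f k (some 1), none, 4, 0, 1, k, b⟩ : GCfg) =
      ⟨0, Function.update f k (some 1), none, 5, 0, 1, k, b⟩ := by
    simp [gstep]
  have hit : (gstep n)^[7] (⟨0, f, none, 0, 0, z2, k, false⟩ : GCfg) =
      (gstep n)^[2] (⟨0, Function.update f k (some 1), none, 5, 0, 1, k, b⟩ : GCfg) := by
    have : (7 : ℕ) = 2 + 5 := rfl
    rw [this, Function.iterate_add_apply]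
    congr 1
    simp only [Function.iterate_succ_apply, Function.iterate_zero_apply,
      show (5:ℕ) = 4+1 from rfl]
    rw [h0, h1, h2, h3, h4]
  rw [hit]
  by_cases hk1 : k + 1 < n
  · have h5 : gstep n (⟨0, Function.update f k (some 1), none, 5, 0, 1, k, b⟩ : GCfg) =
        ⟨0, Function.update f k (some 1), none, 6, 0, 1, k + 1, false⟩ := by
      simp [gstep, show k < n - 1 by omega]
    have h6 : gstep n (⟨0, Function.update f k (some 1), none, 6, 0, 1, k + 1, false⟩ : GCfg) =
        ⟨0, Function.update f k (some 1), none, 0, 0, 1, k + 1, false⟩ := by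
      simp [gstep]
    rw [if_pos hk1]
    simp only [Function.iterate_succ_apply, Function.iterate_zero_apply,
      Function.iterate_one]
    rw [h5, h6]
  · have h5 : gstep n (⟨0, Function.update f k (some 1), none, 5, 0, 1, k, b⟩ : GCfg) =
        ⟨0, Function.update f k (some 1), none, 6, 0, 1, k, true⟩ := by
      simp [gstep, show ¬ (k < n - 1) by omega]
    have h6 : gstep n (⟨0, Function.update f k (some 1), none, 6, 0, 1, k, true⟩ : GCfg) =
        ⟨0, Function.update f k (some 1), none, 7, 0, 1, k, true⟩ := by
      simp [gstep]
    rw [if_neg hk1]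
    simp only [Function.iterate_succ_apply, Function.iterate_zero_apply,
      Function.iterate_one]
    rw [h5, h6]

lemma gmain (n : ℕ) (hn : 1 ≤ n) : ∀ k ≤ n, (gstep n)^[7 * k] ginit = gcfg n k := by
  intro k hk
  induction k with
  | zero =>
    simp only [Nat.mul_zero, Function.iterate_zero_apply]
    have hf : (fun b : ℕ => if b < 0 then some 1 else some (0:ℕ)) = fun _ => some 0 := by
      funext b; simp
    simp [gcfg, ginit, show 0 < n by omega, hf]
  | succ k ih =>
    have hk' : k < n := by omega
    rw [show 7 * (k + 1) = 7 + 7 * k by ring, Function.iterate_add_apply,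
      ih (le_of_lt hk'),
      show gcfg n k = ⟨0, fun b => if b < k then some 1 else some 0,
        none, 0, 0, min k 1, k, false⟩ from by simp [gcfg, hk'],
      iter7 n k hk' (min k 1) (by omega) _ (by simp)]
    have hupd : Function.update (fun b => if b < k then some 1 else some (0:ℕ)) k (some 1)
        = fun b => if b < k + 1 then some 1 else some 0 := by
      funext x
      rcases lt_trichotomy x k with h | h | h
      · simp [Function.update, h.ne, h, Nat.lt_succ_of_lt h]
      · subst h; simp [Function.update]
      · simp [Function.update, h.ne', show ¬ x < k by omega, show ¬ x < k + 1 by omega]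
    by_cases h : k + 1 < n
    · rw [if_pos h, hupd]
      simp [gcfg, h, show min (k + 1) 1 = 1 by omega]
    · rw [if_neg h]
      have hn1 : n = k + 1 := by omega
      subst hn1
      rw [hupd]
      simp [gcfg]

/-- The single-ball-per-trip Gripper program terminates with all n balls in
room B; moreover each loop iteration (7 steps) maintains the invariant that
after the k-th iteration the first k balls are in room B, the robot is in room
A, and the gripper is free. -/
theorem gripper_program_correct (n : ℕ) (hn : 1 ≤ n) :
    (((gstep n)^[7 * n] ginit).line = 7 ∧
      ∀ b < n, ((gstep n)^[7 * n] ginit).ballRoom b = some 1) ∧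
    (∀ k ≤ n,
      (∀ b < k, ((gstep n)^[7 * k] ginit).ballRoom b = some 1) ∧
      ((gstep n)^[7 * k] ginit).robby = 0 ∧
      ((gstep n)^[7 * k] ginit).carrying = none) := by
  have hmain := gmain n hn
  constructor
  · rw [hmain n le_rfl]
    constructor
    · simp [gcfg]
    · intro b hb
      simp [gcfg, hb]
  · intro k hk
    rw [hmain k hk]
    refine ⟨fun b hb => ?_, ?_, ?_⟩ <;>
      by_cases h : k < n <;>
      simp [gcfg, h] <;>
      omega
end
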